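/- arXiv:math/0610111 — 5 statements merged into one kernel-verified Lean document; each statement's English description precedes it below -/
import Mathlib

section
/- Let 0 < q < s < 1 and d(x) = 1 - q^2 - s^2 - 2qsx - x^2. Then the maximum over x in [-qs - (2/3)√((1-q^2)(1-s^2)), -qs] of √((1-q^2)(1-s^2)/d(x)) equals 3√5/5. -/
theorem max_sqrt_ratio (q s : ℝ) (hq : 0 < q) (hqs : q < s) (hs : s < 1) :
    IsGreatest
      ((fun x => Real.sqrt (((1 - q ^ 2) * (1 - s ^ 2)) /
          (1 - q ^ 2 - s ^ 2 - 2 * q * s * x - x ^ 2))) ''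
        Set.Icc (-(q * s) - 2 / 3 * Real.sqrt ((1 - q ^ 2) * (1 - s ^ 2))) (-(q * s)))
      (3 * Real.sqrt 5 / 5) := by
  have hq1 : q < 1 := hqs.trans hs
  have hs0 : 0 < s := hq.trans hqs
  set A := (1 - q ^ 2) * (1 - s ^ 2) with hAdef
  have hA : 0 < A := mul_pos (by nlinarith) (by nlinarith)
  set D := Real.sqrt A with hDdef
  have hD2 : D ^ 2 = A := Real.sq_sqrt hA.le
  have hDpos : 0 < D := Real.sqrt_pos.mpr hA
  have hval : (3 : ℝ) * Real.sqrt 5 / 5 = Real.sqrt (9 / 5) := by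
    rw [show (9 : ℝ) / 5 = (3 * Real.sqrt 5 / 5) ^ 2 by
      have h5 : Real.sqrt 5 ^ 2 = 5 := Real.sq_sqrt (by norm_num)
      nlinarith]
    exact (Real.sqrt_sq (by positivity)).symm
  constructor
  · refine ⟨-(q * s) - 2 / 3 * D, ⟨le_refl _, by linarith⟩, ?_⟩
    have hd : 1 - q ^ 2 - s ^ 2 - 2 * q * s * (-(q * s) - 2 / 3 * D)
        - (-(q * s) - 2 / 3 * D) ^ 2 = 5 / 9 * A := by
      linear_combination hAdef - (4 / 9) * hD2
    simp only [hd]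
    rw [show A / (5 / 9 * A) = 9 / 5 by field_simp]
    exact hval.symm
  · rintro y ⟨x, ⟨hx1, hx2⟩, rfl⟩
    have hsq : (x + q * s) ^ 2 ≤ 4 / 9 * A := by nlinarith
    have hden : 1 - q ^ 2 - s ^ 2 - 2 * q * s * x - x ^ 2 ≥ 5 / 9 * A := by
      nlinarith
    have hdpos : 0 < 1 - q ^ 2 - s ^ 2 - 2 * q * s * x - x ^ 2 := by nlinarith
    rw [hval]
    apply Real.sqrt_le_sqrt
    rw [div_le_iff₀ hdpos]
    linarith
end

section
/- For all q, s with 0 < q < s < 1, the quantity w_2 = (729 - 864·S + 160·S^2)·Q^4 + 4·(135 - 104·S + 16·S^2)·S·Q^3 + 2·(11 - 208·S + 80·S^2)·S^2·Q^2 + 108·(5 - 8·S)·S^3·Q + 729·S^4 is strictly positive, where Q = √(1-q), S = √(1-s) (so 0 < S < Q ≤ 1). -/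
lemma w2_pos_aux (Q S : ℝ) (h0 : 0 < S) (h1 : S < Q) (h2 : Q < 1) :
    0 < (729 - 864 * S + 160 * S ^ 2) * Q ^ 4
        + 4 * (135 - 104 * S + 16 * S ^ 2) * S * Q ^ 3
        + 2 * (11 - 208 * S + 80 * S ^ 2) * S ^ 2 * Q ^ 2
        + 108 * (5 - 8 * S) * S ^ 3 * Q
        + 729 * S ^ 4 := by
  nlinarith [sq_nonneg (Q-S), sq_nonneg (Q+S), mul_pos h0 (h0.trans h1), sq_nonneg (Q*S),
    sq_nonneg (Q^2-S^2), sq_nonneg (Q^2-S*Q), sq_nonneg (S^2-S*Q), mul_pos h0 h0,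
    sq_nonneg (1-Q), sq_nonneg (1-S),
    mul_pos (mul_pos h0 h0) (mul_pos (h0.trans h1) (h0.trans h1))]

theorem w2_pos (q s : ℝ) (hq : 0 < q) (hqs : q < s) (hs : s < 1) :
    0 < (729 - 864 * Real.sqrt (1 - s) + 160 * Real.sqrt (1 - s) ^ 2) * Real.sqrt (1 - q) ^ 4
        + 4 * (135 - 104 * Real.sqrt (1 - s) + 16 * Real.sqrt (1 - s) ^ 2) * Real.sqrt (1 - s)
            * Real.sqrt (1 - q) ^ 3
        + 2 * (11 - 208 * Real.sqrt (1 - s) + 80 * Real.sqrt (1 - s) ^ 2)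
            * Real.sqrt (1 - s) ^ 2 * Real.sqrt (1 - q) ^ 2
        + 108 * (5 - 8 * Real.sqrt (1 - s)) * Real.sqrt (1 - s) ^ 3 * Real.sqrt (1 - q)
        + 729 * Real.sqrt (1 - s) ^ 4 := by
  have h0 : 0 < Real.sqrt (1 - s) := Real.sqrt_pos.2 (by linarith)
  have h1 : Real.sqrt (1 - s) < Real.sqrt (1 - q) :=
    Real.sqrt_lt_sqrt (by linarith) (by linarith)
  have h2 : Real.sqrt (1 - q) < 1 := by
    have := Real.sqrt_lt_sqrt (x := 1 - q) (y := 1) (by linarith) (by linarith)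
    simpa using this
  exact w2_pos_aux _ _ h0 h1 h2
end

section
/- Let 0 < ω < τ < π/2. Then for all x ≥ 0: 10·sin^2(τ+ω)·x^3 + (5 + 2cos 2τ + 2cos 2ω - cos 2(τ+ω))·x^2 + (5 + 2cos 2τ + 2cos 2ω - cos 2(τ-ω))·x + 10·sin^2(τ-ω) > 0. -/
theorem cubic_pos (ω τ : ℝ) (hω : 0 < ω) (hωτ : ω < τ) (hτ : τ < Real.pi / 2) :
    ∀ x : ℝ, 0 ≤ x →
      0 < 10 * Real.sin (τ + ω) ^ 2 * x ^ 3
        + (5 + 2 * Real.cos (2 * τ) + 2 * Real.cos (2 * ω)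
            - Real.cos (2 * (τ + ω))) * x ^ 2
        + (5 + 2 * Real.cos (2 * τ) + 2 * Real.cos (2 * ω)
            - Real.cos (2 * (τ - ω))) * x
        + 10 * Real.sin (τ - ω) ^ 2 := by
  intro x hx
  have hpi := Real.pi_pos
  have hs : 0 < Real.sin (τ - ω) :=
    Real.sin_pos_of_pos_of_lt_pi (by linarith) (by linarith)
  have h1 := Real.neg_one_le_cos (2 * τ)
  have h2 := Real.neg_one_le_cos (2 * ω)
  have h3 := Real.cos_le_one (2 * (τ + ω))
  have h4 := Real.cos_le_one (2 * (τ - ω))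
  have hA : 0 ≤ 10 * Real.sin (τ + ω) ^ 2 * x ^ 3 := by positivity
  have hB : 0 ≤ (5 + 2 * Real.cos (2 * τ) + 2 * Real.cos (2 * ω)
      - Real.cos (2 * (τ + ω))) * x ^ 2 := by
    have := sq_nonneg x
    nlinarith
  have hC : 0 ≤ (5 + 2 * Real.cos (2 * τ) + 2 * Real.cos (2 * ω)
      - Real.cos (2 * (τ - ω))) * x := by nlinarith
  have hD : 0 < 10 * Real.sin (τ - ω) ^ 2 := by positivity
  linarith
end

section
/- Let k ≥ 1 be an integer and α > β > 0 real. Set r = 2k + α + β + 1, ρ = r - 1, η = α - β, σ = α + β, q = η/r, s = σ/r. Then √((1-q^2)(1-s^2)) > (ρ/(ρ-1))·√((ρ^2-η^2)(ρ^2-σ^2))/r^2. -/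
set_option maxHeartbeats 1000000


theorem sqrt_ineq (k : ℕ) (hk : 1 ≤ k) (α β : ℝ) (hβ : 0 < β) (hαβ : β < α) :
    Real.sqrt ((1 - ((α - β) / (2 * k + α + β + 1)) ^ 2)
        * (1 - ((α + β) / (2 * k + α + β + 1)) ^ 2))
      > (2 * k + α + β) / (2 * k + α + β - 1)
        * Real.sqrt (((2 * k + α + β) ^ 2 - (α - β) ^ 2)
            * ((2 * k + α + β) ^ 2 - (α + β) ^ 2))
        / (2 * k + α + β + 1) ^ 2 := by
  have hk' : (1:ℝ) ≤ (k:ℝ) := by exact_mod_cast hk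
  set t : ℝ := 2 * (k:ℝ) + α + β with ht
  have ht2 : 2 < t := by simp only [ht]; nlinarith
  have hr : (0:ℝ) < t + 1 := by linarith
  have hη : 0 < α - β := by linarith
  have hσ : 0 < α + β := by linarith
  have hσt : α + β < t := by simp only [ht]; nlinarith
  clear_value t
  have hηt : α - β < t := by linarith
  have hC : 0 < t ^ 2 - (α - β) ^ 2 := by nlinarith
  have hD : 0 < t ^ 2 - (α + β) ^ 2 := by nlinarith
  have hA : 0 < (t + 1) ^ 2 - (α - β) ^ 2 := by nlinarith
  have hB : 0 < (t + 1) ^ 2 - (α + β) ^ 2 := by nlinarith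
  have e1 : t * (t ^ 2 - (α - β) ^ 2) < ((t + 1) ^ 2 - (α - β) ^ 2) * (t - 1) := by
    nlinarith
  have e2 : t * (t ^ 2 - (α + β) ^ 2) < ((t + 1) ^ 2 - (α + β) ^ 2) * (t - 1) := by
    nlinarith
  have key : t ^ 2 * ((t ^ 2 - (α - β) ^ 2) * (t ^ 2 - (α + β) ^ 2))
      < (t - 1) ^ 2 * (((t + 1) ^ 2 - (α - β) ^ 2) * ((t + 1) ^ 2 - (α + β) ^ 2)) := by
    have := mul_lt_mul'' e1 e2 (by positivity) (by positivity)
    nlinarith [this]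
  set S : ℝ := Real.sqrt ((t ^ 2 - (α - β) ^ 2) * (t ^ 2 - (α + β) ^ 2)) with hS
  have hS0 : 0 ≤ S := Real.sqrt_nonneg _
  have hS2 : S ^ 2 = (t ^ 2 - (α - β) ^ 2) * (t ^ 2 - (α + β) ^ 2) :=
    Real.sq_sqrt (by positivity)
  clear_value S
  have ht1 : (0:ℝ) < t - 1 := by linarith
  have hRHS : 0 ≤ t / (t - 1) * S / (t + 1) ^ 2 :=
    div_nonneg (mul_nonneg (div_nonneg (by linarith) ht1.le) hS0) (by positivity)
  rw [gt_iff_lt, Real.lt_sqrt hRHS]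
  have h1 : (t / (t - 1) * S / (t + 1) ^ 2) ^ 2
      = t ^ 2 * ((t ^ 2 - (α - β) ^ 2) * (t ^ 2 - (α + β) ^ 2))
        / ((t - 1) ^ 2 * ((t + 1) ^ 2) ^ 2) := by
    rw [div_pow, mul_pow, div_pow, hS2]
    field_simp
  have h2 : (1 - ((α - β) / (t + 1)) ^ 2) * (1 - ((α + β) / (t + 1)) ^ 2)
      = ((t + 1) ^ 2 - (α - β) ^ 2) * ((t + 1) ^ 2 - (α + β) ^ 2) / ((t + 1) ^ 2) ^ 2 := by
    field_simp
  rw [h1, h2, div_lt_div_iff₀ (by positivity) (by positivity)]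
  nlinarith [mul_lt_mul_of_pos_right key (pow_pos hr 4)]
end

section
/- Let k ≥ 6 be an integer and α ≥ β ≥ (1+√2)/4 real. Then ((α+β)^2·(2k+α+β+1)^2 / ((2k+1)(2k+2α+2β+1)))^{1/6} ≤ (4α^2·(2k+2α+1)^2 / ((2k+1)(2k+4α+1)))^{1/6}, and (9/4)·(4α^2·(2k+2α+1)^2/((2k+1)(2k+4α+1)))^{1/6} < 3·α^{1/3}·(1 + α/k)^{1/6}. -/
lemma aux_mono (c s t : ℝ) (hc : 0 < c) (hs : 0 < s) (hst : s ≤ t) :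
    s^2*(c+s)^2*(c+2*t) ≤ t^2*(c+t)^2*(c+2*s) := by
  have h1 : s^2*(c+2*t) ≤ t^2*(c+2*s) := by nlinarith [mul_nonneg (sub_nonneg.2 hst) hs.le, mul_nonneg (sub_nonneg.2 hst) hc.le, mul_pos hs (hs.trans_le hst)]
  have h2 : (c+s)^2 ≤ (c+t)^2 := by nlinarith
  calc s^2*(c+s)^2*(c+2*t) = s^2*(c+2*t)*(c+s)^2 := by ring
    _ ≤ t^2*(c+2*s)*(c+s)^2 := mul_le_mul_of_nonneg_right h1 (sq_nonneg _)
    _ ≤ t^2*(c+2*s)*(c+t)^2 := by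
        apply mul_le_mul_of_nonneg_left h2
        positivity
    _ = t^2*(c+t)^2*(c+2*s) := by ring

theorem final_estimate (k : ℕ) (hk : 6 ≤ k) (α β : ℝ)
    (hβ : (1 + Real.sqrt 2) / 4 ≤ β) (hαβ : β ≤ α) :
    ((α + β) ^ 2 * (2 * k + α + β + 1) ^ 2
        / ((2 * k + 1) * (2 * k + 2 * α + 2 * β + 1))) ^ ((1 : ℝ) / 6)
      ≤ (4 * α ^ 2 * (2 * k + 2 * α + 1) ^ 2
          / ((2 * k + 1) * (2 * k + 4 * α + 1))) ^ ((1 : ℝ) / 6) ∧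
    (9 / 4 : ℝ) * (4 * α ^ 2 * (2 * k + 2 * α + 1) ^ 2
          / ((2 * k + 1) * (2 * k + 4 * α + 1))) ^ ((1 : ℝ) / 6)
      < 3 * α ^ ((1 : ℝ) / 3) * (1 + α / k) ^ ((1 : ℝ) / 6) := by
  have hs2 : (1:ℝ) ≤ Real.sqrt 2 := by
    nlinarith [Real.sq_sqrt (by norm_num : (0:ℝ) ≤ 2), Real.sqrt_nonneg 2]
  have hβ0 : (0:ℝ) < β := lt_of_lt_of_le (by nlinarith) hβ
  have hα0 : (0:ℝ) < α := hβ0.trans_le hαβ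
  have hk6 : (6:ℝ) ≤ (k:ℝ) := by exact_mod_cast hk
  have hk0 : (0:ℝ) < (k:ℝ) := by linarith
  set K : ℝ := (k:ℝ) with hK
  have hDL : (0:ℝ) < (2 * K + 1) * (2 * K + 2 * α + 2 * β + 1) := by nlinarith
  have hDR : (0:ℝ) < (2 * K + 1) * (2 * K + 4 * α + 1) := by nlinarith
  set X : ℝ := 4 * α ^ 2 * (2 * K + 2 * α + 1) ^ 2 / ((2 * K + 1) * (2 * K + 4 * α + 1)) with hXdef
  have hX : 0 ≤ X := by
    apply div_nonneg _ hDR.le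
    positivity
  constructor
  · apply Real.rpow_le_rpow _ _ (by norm_num)
    · apply div_nonneg _ hDL.le
      positivity
    · rw [div_le_div_iff₀ hDL hDR]
      have key := aux_mono (2*K+1) (α+β) (2*α) (by linarith) (by linarith) (by linarith)
      have key2 := mul_le_mul_of_nonneg_left key (show (0:ℝ) ≤ 2*K+1 by linarith)
      nlinarith [key2]
  · have target : 729 * K * (2*K+2*α+1)^2 < 1024 * (K+α) * (2*K+1) * (2*K+4*α+1) := by
      nlinarith [mul_pos hk0 hk0, mul_pos (mul_pos hk0 hk0) hk0,
        mul_pos (mul_pos hk0 hk0) hα0, mul_pos hk0 hα0,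
        mul_pos (mul_pos hk0 hα0) hα0, mul_pos hα0 hα0]
    have goal6 : ((9/4 : ℝ) * X ^ ((1:ℝ)/6)) ^ (6:ℕ)
        < (3 * α ^ ((1:ℝ)/3) * (1 + α / K) ^ ((1:ℝ)/6)) ^ (6:ℕ) := by
      have h1k : (0:ℝ) ≤ 1 + α / K := by positivity
      have eX : (X ^ ((1:ℝ)/6)) ^ (6:ℕ) = X := by
        rw [← Real.rpow_natCast (X ^ ((1:ℝ)/6)) 6, ← Real.rpow_mul hX]
        norm_num
      have eα : (α ^ ((1:ℝ)/3)) ^ (6:ℕ) = α ^ 2 := by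
        rw [← Real.rpow_natCast (α ^ ((1:ℝ)/3)) 6, ← Real.rpow_mul hα0.le]
        norm_num
      have ek : ((1 + α / K) ^ ((1:ℝ)/6)) ^ (6:ℕ) = 1 + α / K := by
        rw [← Real.rpow_natCast ((1 + α / K) ^ ((1:ℝ)/6)) 6, ← Real.rpow_mul h1k]
        norm_num
      rw [mul_pow, mul_pow, mul_pow, eX, eα, ek]
      have h1k' : (1 + α / K) = (K + α) / K := by field_simp
      rw [h1k']
      rw [show ((9/4:ℝ))^(6:ℕ) * X = ((9/4:ℝ)^(6:ℕ) * (4 * α ^ 2 * (2 * K + 2 * α + 1) ^ 2)) / ((2 * K + 1) * (2 * K + 4 * α + 1)) from by rw [hXdef]; ring,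
        show (3:ℝ)^(6:ℕ) * α^2 * ((K + α)/K) = ((3:ℝ)^(6:ℕ) * α^2 * (K + α)) / K from by ring,
        div_lt_div_iff₀ hDR hk0]
      have key := mul_lt_mul_of_pos_left target (show (0:ℝ) < α^2 by positivity)
      norm_num
      linarith [key]
    have hR : 0 ≤ 3 * α ^ ((1:ℝ)/3) * (1 + α / K) ^ ((1:ℝ)/6) := by positivity
    exact lt_of_pow_lt_pow_left₀ 6 hR goal6
end
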